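/- arXiv:2112.14047 — 2 statements merged into one kernel-verified Lean document; each statement's English description precedes it below -/
import Mathlib

section
/- For all positive integers n and r, h_n^{(r)} = (n^{\overline{r}} / (n * (r-1)!)) * (H_{n+r-1} - ψ(r) - γ), where n^{\overline{r}} = n(n+1)···(n+r-1) is the rising factorial, ψ is the digamma function and γ is the Euler–Mascheroni constant. -/
open Filter Finset

/-- Hyperharm numbers: `hh 0 n = 1/n`, `hh (r+1) n = ∑_{k=1}^n hh r k`. -/
noncomputable def hh : ℕ → ℕ → ℝ
  | 0, n => 1 / n
  | r + 1, n => ∑ k ∈ Finset.Icc 1 n, hh r k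

/-- Harmonic numbers `H n = ∑_{k=1}^n 1/k`. -/
noncomputable def harm (n : ℕ) : ℝ := ∑ k ∈ Finset.Icc 1 n, (1 : ℝ) / k

/-- Rising factorial `x^{\overline r} = x (x+1) ⋯ (x+r-1)`. -/
noncomputable def risingFactorial (x : ℝ) (r : ℕ) : ℝ := ∏ i ∈ Finset.range r, (x + i)

/-- Digamma function `ψ = Γ'/Γ` on the reals. -/
noncomputable def digamma (x : ℝ) : ℝ := deriv Real.Gamma x / Real.Gamma x

/-! By induction on `r`, `h_n^{(s+1)} = C(n+s, s) (H_{n+s} - H_s)`: summing these weights over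
`n` is a Pascal-type recursion, because `C(N+1, s+1) / (N+1) = C(N, s) / (s+1)` absorbs the two
new harmonic terms. The stated form follows from `n^{\overline{s+1}} = n s! C(n+s, s)` and
`ψ(s+1) + γ = H_s`, Mathlib's formula for `Γ'` at the integers. -/

open Real

lemma harm_eq_harmonic (n : ℕ) : harm n = harmonic n := by
  simp [harm, harmonic_eq_sum_Icc]

lemma harm_succ (n : ℕ) : harm (n + 1) = harm n + 1 / (n + 1) := by
  simp [harm_eq_harmonic, harmonic_succ]

lemma digamma_natCast {r : ℕ} (hr : 0 < r) :
    digamma r = harm (r - 1) - eulerMascheroniConstant := by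
  obtain ⟨s, rfl⟩ : ∃ s, r = s + 1 := ⟨r - 1, by omega⟩
  have hΓ : Gamma (s + 1) = s.factorial := Gamma_nat_eq_factorial s
  have hs : (s.factorial : ℝ) ≠ 0 := by positivity
  rw [digamma, Nat.add_sub_cancel, Nat.cast_add_one, deriv_Gamma_nat, hΓ,
    harm_eq_harmonic]
  field_simp
  ring

lemma risingFactorial_natCast (n k : ℕ) : risingFactorial n k = n.ascFactorial k := by
  simp [risingFactorial, Nat.ascFactorial_eq_prod_range]

lemma risingFactorial_natCast_succ (n s : ℕ) :
    risingFactorial n (s + 1) = n * s.factorial * (n + s).choose s := by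
  rw [risingFactorial_natCast, Nat.ascFactorial_succ, ← Nat.succ_ascFactorial,
    Nat.succ_eq_add_one, Nat.ascFactorial_eq_factorial_mul_choose]
  push_cast
  ring

lemma choose_mul_harm_sub_succ (N s : ℕ) :
    ((N + 1).choose (s + 1) : ℝ) * (harm (N + 1) - harm (s + 1)) =
      (N.choose (s + 1) : ℝ) * (harm N - harm (s + 1)) + (N.choose s : ℝ) * (harm N - harm s) := by
  have hpascal : ((N + 1).choose (s + 1) : ℝ) = N.choose s + N.choose (s + 1) := by
    exact_mod_cast Nat.choose_succ_succ N s
  have habsorb : ((N : ℝ) + 1) * N.choose s = (N + 1).choose (s + 1) * (s + 1) := by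
    exact_mod_cast Nat.add_one_mul_choose_eq N s
  have hweight : ((N + 1).choose (s + 1) : ℝ) / (N + 1) = N.choose s / (s + 1) := by
    rw [div_eq_div_iff (by positivity) (by positivity)]
    linear_combination -habsorb
  rw [hpascal] at hweight ⊢
  rw [harm_succ N, harm_succ s]
  linear_combination hweight

lemma sum_choose_mul_harm_sub (m s : ℕ) :
    ∑ k ∈ Icc 1 m, ((k + s).choose s : ℝ) * (harm (k + s) - harm s) =
      ((m + s + 1).choose (s + 1) : ℝ) * (harm (m + s + 1) - harm (s + 1)) := by
  induction m with
  | zero => simp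
  | succ m ih =>
    rw [sum_Icc_succ_top (by omega), ih, Nat.add_right_comm m 1 s,
      choose_mul_harm_sub_succ (m + s + 1) s]

lemma hh_succ (s n : ℕ) : hh (s + 1) n = ((n + s).choose s : ℝ) * (harm (n + s) - harm s) := by
  induction s generalizing n with
  | zero => simp [hh, harm]
  | succ s ih =>
    rw [hh, sum_congr rfl fun k _ ↦ ih k, sum_choose_mul_harm_sub, Nat.add_assoc]

theorem stmt1 (n r : ℕ) (hn : 0 < n) (hr : 0 < r) :
    hh r n = risingFactorial n r / (n * (r - 1).factorial) *
      (harm (n + r - 1) - digamma r - Real.eulerMascheroniConstant) := by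
  obtain ⟨s, rfl⟩ : ∃ s, r = s + 1 := ⟨r - 1, by omega⟩
  have hcoeff : risingFactorial n (s + 1) / (n * s.factorial) = (n + s).choose s := by
    rw [risingFactorial_natCast_succ, mul_div_cancel_left₀]
    have : (n : ℝ) ≠ 0 := by exact_mod_cast hn.ne'
    positivity
  rw [hh_succ, digamma_natCast hr, Nat.add_sub_cancel, hcoeff, ← Nat.add_assoc,
    Nat.add_sub_cancel]
  ring
end

section
/- For positive integers n and r, h_n^{(r+1)} = (1 + n/r) h_n^{(r)} - (n / (r (n+r))) * binomial(n+r, r). -/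
open Finset

/-! By Pascal's rule `h_{n+1}^{(r+1)} = h_n^{(r+1)} + h_{n+1}^{(r)}` and induction, hyperharmonic
numbers have the closed form `h_n^{(r+1)} = C(n+r, r) (H_{n+r} - H_r)`. The recurrence then comes
from `(n+r)/r · C(n+r-1, r-1) = C(n+r, r)` and `1/(n+r) - 1/r = -n / (r (n+r))`. -/

lemma hh_succ_zero (r : ℕ) : hh (r + 1) 0 = 0 := by
  simp [hh]

lemma hh_one (n : ℕ) : hh 1 n = harmonic n := by
  simp [hh, harmonic_eq_sum_Icc]

lemma hh_succ_succ (r n : ℕ) : hh (r + 1) (n + 1) = hh (r + 1) n + hh r (n + 1) := by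
  simp only [hh]
  exact sum_Icc_succ_top (by omega) _

lemma cast_choose_succ_succ_div (m k : ℕ) :
    ((m + 1).choose (k + 1) : ℝ) / (m + 1) = m.choose k / (k + 1) := by
  have h : ((m : ℝ) + 1) * m.choose k = (m + 1).choose (k + 1) * ((k : ℝ) + 1) := by
    exact_mod_cast Nat.add_one_mul_choose_eq m k
  field_simp
  linear_combination -h

theorem hh_succ_eq_choose_mul_harmonic_sub (r n : ℕ) :
    hh (r + 1) n = (n + r).choose r * ((harmonic (n + r) : ℝ) - harmonic r) := by
  induction r generalizing n with
  | zero => simp [hh_one]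
  | succ r ihr =>
    induction n with
    | zero => simp [hh_succ_zero]
    | succ n ihn =>
      rw [hh_succ_succ, ihn, ihr, show n + 1 + (r + 1) = n + r + 1 + 1 by omega,
        show n + (r + 1) = n + r + 1 by omega, show n + 1 + r = n + r + 1 by omega]
      have hdiv := cast_choose_succ_succ_div (n + r + 1) r
      rw [Nat.choose_succ_succ' (n + r + 1) r] at hdiv ⊢
      simp only [harmonic_succ]
      push_cast at hdiv ⊢
      linear_combination -hdiv

theorem stmt5_general (n r : ℕ) (hr : 0 < r) :
    hh (r + 1) n = (1 + (n : ℝ) / r) * hh r n -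
      ((n : ℝ) / (r * (n + r))) * (Nat.choose (n + r) r : ℝ) := by
  obtain ⟨s, rfl⟩ : ∃ s, r = s + 1 := ⟨r - 1, by omega⟩
  rw [hh_succ_eq_choose_mul_harmonic_sub, hh_succ_eq_choose_mul_harmonic_sub,
    show n + (s + 1) = n + s + 1 by omega]
  have hchoose : ((n + s + 1).choose (s + 1) : ℝ) = (1 + n / (s + 1 : ℝ)) * (n + s).choose s := by
    have hdiv := cast_choose_succ_succ_div (n + s) s
    push_cast at hdiv
    rw [div_eq_iff (by positivity)] at hdiv
    rw [hdiv]
    field_simp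
    ring
  simp only [harmonic_succ]
  push_cast
  rw [hchoose]
  field_simp
  ring

theorem stmt5 (n r : ℕ) (hn : 0 < n) (hr : 0 < r) :
    hh (r + 1) n = (1 + (n : ℝ) / r) * hh r n -
      ((n : ℝ) / (r * (n + r))) * (Nat.choose (n + r) r : ℝ) :=
  stmt5_general n r hr
end
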